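/- Let G be a finite graph on k vertices and for each permutation π let Q_π = P_πᵀ L_πᵀ F_π L_π P_π be the DAGAR precision matrix with parameter 0 ≤ ρ < 1 under ordering π. Define Q = (1/k!) Σ_π Q_π. Then the diagonal entries of Q satisfy Q_{ii} = 1 + n_i ρ²/(2(1-ρ²)) + (ρ²/(1-ρ²)) Σ_{j ~ i} (1/(n_j(n_j+1))) Σ_{r=1}^{n_j} r/(1+(r-1)ρ²). -/

import Mathlib

open Matrix BigOperators Finset
open scoped Classical

/-- The set of directed neighbours of `v`: neighbours of `v` in `G` preceding `v`
in the ordering given by the rank function `ord`. -/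
noncomputable def dagarN {V : Type*} [Fintype V] [DecidableEq V] (G : SimpleGraph V)
    (ord : V → ℕ) (v : V) : Finset V :=
  Finset.univ.filter (fun u => G.Adj v u ∧ ord u < ord v)

/-- The DAGAR autoregression coefficient matrix `B`:
`B v u = ρ/(1+(n_v-1)ρ²)` if `u` is a directed neighbour of `v` (with `n_v` the number of
directed neighbours of `v`), and `0` otherwise. -/
noncomputable def dagarB {V : Type*} [Fintype V] [DecidableEq V] (G : SimpleGraph V)
    (ord : V → ℕ) (ρ : ℝ) : Matrix V V ℝ :=
  Matrix.of fun v u =>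
    if u ∈ dagarN G ord v then ρ / (1 + (((dagarN G ord v).card : ℝ) - 1) * ρ ^ 2) else 0

/-- The DAGAR diagonal matrix of conditional precisions `τ_v = (1+(n_v-1)ρ²)/(1-ρ²)`. -/
noncomputable def dagarF {V : Type*} [Fintype V] [DecidableEq V] (G : SimpleGraph V)
    (ord : V → ℕ) (ρ : ℝ) : Matrix V V ℝ :=
  Matrix.diagonal fun v => (1 + (((dagarN G ord v).card : ℝ) - 1) * ρ ^ 2) / (1 - ρ ^ 2)

/-- The DAGAR precision matrix `Q = (I-B)ᵀ F (I-B)` for the ordering `ord`. -/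
noncomputable def dagarQ {V : Type*} [Fintype V] [DecidableEq V] (G : SimpleGraph V)
    (ord : V → ℕ) (ρ : ℝ) : Matrix V V ℝ :=
  (1 - dagarB G ord ρ)ᵀ * dagarF G ord ρ * (1 - dagarB G ord ρ)

/-- The order-free DAGAR precision matrix: the average of the DAGAR precision matrices
over all `k!` orderings (permutations) of the vertices. -/
noncomputable def dagarOF {V : Type*} [Fintype V] [DecidableEq V] (G : SimpleGraph V)
    (ρ : ℝ) : Matrix V V ℝ :=
  ((Nat.factorial (Fintype.card V) : ℝ))⁻¹ •
    ∑ π : Equiv.Perm V, dagarQ G (fun v => ((Fintype.equivFin V) (π v) : ℕ)) ρ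


/-! Averaging over all orderings makes the rank of any member `u` of a finite set `T` uniformly
distributed on `{0, …, #T - 1}`: composing an ordering with the transposition of two members of
`T` exchanges their ranks, and in each ordering the ranks of the members of `T` are a permutation
of `{0, …, #T - 1}`.

For one ordering, `Q_π i i = 1 + ρ²/(1-ρ²) (n_π(i) + ∑_{j ~ i, i before j} 1/(1+(n_π(j)-1)ρ²))`,
and `n_π(j)` is the rank of `j` in its closed neighbourhood. Hence `n_π(i)` averages to `n_i/2`.
By the same transposition symmetry every neighbour of `j` is equally likely to be one of the
`n_π(j)` neighbours preceding `j`, so `i` precedes `j` with conditional probability `n_π(j)/n_j`,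
which produces the weight `r/(n_j(n_j+1))`. -/

section OrderRank

variable {V : Type*}

def orderRank (ord : V → ℕ) (T : Finset V) (u : V) : ℕ := #{w ∈ T | ord w < ord u}

lemma orderRank_comp (ord : V → ℕ) {T : Finset V} {σ : Equiv.Perm V}
    (hσ : ∀ w, σ w ∈ T ↔ w ∈ T) (u : V) : orderRank (ord ∘ σ) T u = orderRank ord T (σ u) :=
  card_equiv σ fun w => by simp [hσ]

lemma orderRank_lt_orderRank {ord : V → ℕ} {T : Finset V} {u v : V} (hu : u ∈ T)
    (h : ord u < ord v) : orderRank ord T u < orderRank ord T v :=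
  card_lt_card <| (ssubset_iff_of_subset fun _ hw => by
    simp only [mem_filter] at hw ⊢; exact ⟨hw.1, hw.2.trans h⟩).2 ⟨u, by simp [hu, h], by simp⟩

lemma orderRank_lt_card {ord : V → ℕ} {T : Finset V} {u : V} (hu : u ∈ T) :
    orderRank ord T u < #T :=
  card_lt_card <| filter_ssubset.2 ⟨u, hu, lt_irrefl _⟩

lemma orderRank_injOn {ord : V → ℕ} (hord : Function.Injective ord) (T : Finset V) :
    Set.InjOn (orderRank ord T) T := by
  intro u hu v hv h
  by_contra hne
  rcases lt_or_gt_of_ne (hord.ne hne) with huv | hvu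
  · exact (orderRank_lt_orderRank hu huv).ne h
  · exact (orderRank_lt_orderRank hv hvu).ne' h

lemma sum_orderRank {M : Type*} [AddCommMonoid M] {ord : V → ℕ} (hord : Function.Injective ord)
    (T : Finset V) (h : ℕ → M) : ∑ u ∈ T, h (orderRank ord T u) = ∑ m ∈ range #T, h m := by
  have himage : T.image (orderRank ord T) = range #T :=
    eq_of_subset_of_card_le (image_subset_iff.2 fun _ hu => mem_range.2 (orderRank_lt_card hu))
      (by rw [card_range, card_image_of_injOn (orderRank_injOn hord T)])
  rw [← himage, sum_image (orderRank_injOn hord T)]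

lemma swap_apply_mem_iff [DecidableEq V] {T : Finset V} {a b : V} (ha : a ∈ T) (hb : b ∈ T)
    (w : V) : Equiv.swap a b w ∈ T ↔ w ∈ T := by
  rw [Equiv.swap_apply_def]
  split_ifs <;> simp_all

end OrderRank

noncomputable def permOrd {V : Type*} [Fintype V] (π : Equiv.Perm V) (v : V) : ℕ :=
  Fintype.equivFin V (π v)

lemma permOrd_injective {V : Type*} [Fintype V] (π : Equiv.Perm V) :
    Function.Injective (permOrd π) :=
  fun _ _ h => π.injective <| (Fintype.equivFin V).injective <| Fin.val_injective h

section SumPerm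

variable {V : Type*} [Fintype V] [DecidableEq V]

lemma sum_perm_permOrd_comp {M : Type*} [AddCommMonoid M] (F : (V → ℕ) → M)
    (σ : Equiv.Perm V) :
    ∑ π : Equiv.Perm V, F (permOrd π ∘ σ) = ∑ π : Equiv.Perm V, F (permOrd π) :=
  Fintype.sum_equiv (Equiv.mulRight σ) _ _ fun _ => rfl

lemma sum_perm_orderRank_eq_of_mem {M : Type*} [AddCommMonoid M] {T : Finset V} {u v : V}
    (hu : u ∈ T) (hv : v ∈ T) (F : ℕ → M) :
    ∑ π : Equiv.Perm V, F (orderRank (permOrd π) T u)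
      = ∑ π : Equiv.Perm V, F (orderRank (permOrd π) T v) :=
  calc ∑ π : Equiv.Perm V, F (orderRank (permOrd π) T u)
      = ∑ π : Equiv.Perm V, F (orderRank (permOrd π ∘ Equiv.swap u v) T u) :=
        (sum_perm_permOrd_comp (fun ord => F (orderRank ord T u)) _).symm
    _ = ∑ π : Equiv.Perm V, F (orderRank (permOrd π) T v) := by
        simp only [orderRank_comp _ (swap_apply_mem_iff hu hv), Equiv.swap_apply_left]

lemma card_smul_sum_perm_orderRank {M : Type*} [AddCommMonoid M] {T : Finset V} {u : V}
    (hu : u ∈ T) (h : ℕ → M) :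
    #T • ∑ π : Equiv.Perm V, h (orderRank (permOrd π) T u)
      = (Fintype.card V).factorial • ∑ m ∈ range #T, h m :=
  calc #T • ∑ π : Equiv.Perm V, h (orderRank (permOrd π) T u)
      = ∑ w ∈ T, ∑ π : Equiv.Perm V, h (orderRank (permOrd π) T w) := by
        rw [← sum_const]
        exact sum_congr rfl fun w hw => sum_perm_orderRank_eq_of_mem hu hw h
    _ = ∑ π : Equiv.Perm V, ∑ m ∈ range #T, h m := by
        rw [sum_comm]
        exact sum_congr rfl fun π _ => sum_orderRank (permOrd_injective π) T h
    _ = (Fintype.card V).factorial • ∑ m ∈ range #T, h m := by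
        rw [sum_const, card_univ, Fintype.card_perm]

lemma sum_perm_ite_lt_orderRank {T : Finset V} {i j : V} (hi : i ∈ T) (hj : j ∈ T)
    (hij : i ≠ j) (g : ℕ → ℝ) :
    (#T : ℝ) * (#T - 1) * ∑ π : Equiv.Perm V,
        (if permOrd π i < permOrd π j then g (orderRank (permOrd π) T j) else 0)
      = (Fintype.card V).factorial * ∑ m ∈ range #T, m * g m := by
  set S := fun u => ∑ π : Equiv.Perm V,
    (if permOrd π u < permOrd π j then g (orderRank (permOrd π) T j) else 0)
  have hsymm : ∀ u ∈ T.erase j, S u = S i := by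
    intro u hu
    obtain ⟨hju, huT⟩ := mem_erase.1 hu
    refine (sum_perm_permOrd_comp (fun ord => if ord u < ord j then g (orderRank ord T j) else 0)
      (Equiv.swap i u)).symm.trans ?_
    simp only [Function.comp_apply, orderRank_comp _ (swap_apply_mem_iff hi huT),
      Equiv.swap_apply_right, Equiv.swap_apply_of_ne_of_ne hij.symm hju.symm]
    rfl
  have hcount : ∀ ord : V → ℕ,
      ∑ u ∈ T.erase j, (if ord u < ord j then g (orderRank ord T j) else 0)
        = orderRank ord T j * g (orderRank ord T j) := by
    intro ord
    rw [← sum_filter, sum_const, nsmul_eq_mul, filter_erase, erase_eq_of_notMem (by simp),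
      orderRank]
  have hcard : (#(T.erase j) : ℝ) = #T - 1 := by
    rw [card_erase_of_mem hj, Nat.cast_pred (card_pos.2 ⟨j, hj⟩)]
  calc (#T : ℝ) * (#T - 1) * S i = #T * ∑ u ∈ T.erase j, S u := by
        rw [sum_congr rfl hsymm, sum_const, nsmul_eq_mul, hcard, mul_assoc]
    _ = #T • ∑ π : Equiv.Perm V,
          orderRank (permOrd π) T j * g (orderRank (permOrd π) T j) := by
        rw [sum_comm, nsmul_eq_mul]
        simp only [hcount]
    _ = _ := (card_smul_sum_perm_orderRank hj fun m => (m : ℝ) * g m).trans (nsmul_eq_mul _ _)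

end SumPerm

lemma transpose_mul_diagonal_mul_apply_self {V R : Type*} [Fintype V] [DecidableEq V]
    [CommSemiring R] (A : Matrix V V R) (f : V → R) (i : V) :
    (Aᵀ * diagonal f * A) i i = ∑ v, f v * A v i ^ 2 := by
  simp only [mul_apply, transpose_apply, diagonal_apply, mul_ite, mul_zero, sum_ite_eq',
    mem_univ, if_true]
  exact sum_congr rfl fun v _ => by ring

lemma one_sub_transpose_mul_diagonal_mul_apply_self {V R : Type*} [Fintype V] [DecidableEq V]
    [CommRing R] {B : Matrix V V R} {i : V} (hB : B i i = 0) (f : V → R) :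
    ((1 - B : Matrix V V R)ᵀ * diagonal f * (1 - B)) i i = f i + ∑ v, f v * B v i ^ 2 := by
  have hsq : ∀ v, (1 - B) v i ^ 2 = (1 : Matrix V V R) v i + B v i ^ 2 := by
    intro v
    rcases eq_or_ne v i with rfl | hvi
    · simp [hB]
    · simp [one_apply_ne hvi]
  simp only [transpose_mul_diagonal_mul_apply_self, hsq, mul_add, sum_add_distrib, one_apply,
    mul_ite, mul_one, mul_zero, sum_ite_eq', mem_univ, if_true]

section Dagar

variable {V : Type*} [Fintype V] [DecidableEq V] (G : SimpleGraph V)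

lemma mem_dagarN {ord : V → ℕ} {u v : V} : u ∈ dagarN G ord v ↔ G.Adj u v ∧ ord u < ord v := by
  simp [dagarN, G.adj_comm]

lemma card_dagarN_eq_orderRank [DecidableRel G.Adj] (ord : V → ℕ) (j : V) :
    #(dagarN G ord j) = orderRank ord (insert j (G.neighborFinset j)) j := by
  rw [orderRank, filter_insert, if_neg (lt_irrefl _)]
  congr 1
  ext u
  simp [dagarN]

lemma card_insert_neighborFinset [DecidableRel G.Adj] (j : V) :
    #(insert j (G.neighborFinset j)) = G.degree j + 1 :=
  card_insert_of_notMem (G.notMem_neighborFinset_self j)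

lemma dagarQ_apply_self [DecidableRel G.Adj] (ord : V → ℕ) {ρ : ℝ} (hρ : ρ ^ 2 ≠ 1) (i : V) :
    dagarQ G ord ρ i i = 1 + ρ ^ 2 / (1 - ρ ^ 2) * (#(dagarN G ord i) + ∑ j ∈ G.neighborFinset i,
      if ord i < ord j then 1 / (1 + ((#(dagarN G ord j) : ℝ) - 1) * ρ ^ 2) else 0) := by
  have hBii : dagarB G ord ρ i i = 0 := by simp [dagarB, mem_dagarN]
  have hterm : ∀ v, (1 + ((#(dagarN G ord v) : ℝ) - 1) * ρ ^ 2) / (1 - ρ ^ 2)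
        * dagarB G ord ρ v i ^ 2
      = if G.Adj i v then (ρ ^ 2 / (1 - ρ ^ 2) * if ord i < ord v then
          1 / (1 + ((#(dagarN G ord v) : ℝ) - 1) * ρ ^ 2) else 0) else 0 := by
    intro v
    by_cases hv : i ∈ dagarN G ord v
    · obtain ⟨hadj, hlt⟩ := (mem_dagarN G).1 hv
      have hD : 0 < 1 + ((#(dagarN G ord v) : ℝ) - 1) * ρ ^ 2 := by
        have : (1 : ℝ) ≤ #(dagarN G ord v) := by exact_mod_cast card_pos.2 ⟨i, hv⟩
        positivity
      simp only [dagarB, of_apply, if_pos hv, if_pos hadj, if_pos hlt]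
      field_simp
    · rw [mem_dagarN] at hv
      simp only [dagarB, of_apply, mem_dagarN, if_neg hv]
      split_ifs <;> simp_all
  rw [dagarQ, dagarF, one_sub_transpose_mul_diagonal_mul_apply_self hBii,
    sum_congr rfl fun v _ => hterm v, ← sum_filter, ← G.neighborFinset_eq_filter, ← mul_sum]
  field_simp
  ring

lemma sum_perm_card_dagarN [DecidableRel G.Adj] (i : V) :
    ∑ π : Equiv.Perm V, (#(dagarN G (permOrd π) i) : ℝ)
      = (Fintype.card V).factorial * G.degree i / 2 := by
  have hsum := card_smul_sum_perm_orderRank (mem_insert_self i (G.neighborFinset i))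
    fun m => (m : ℝ)
  have hgauss : (∑ m ∈ range (G.degree i + 1), (m : ℝ)) * 2 = (G.degree i + 1) * G.degree i := by
    have h := sum_range_id_mul_two (G.degree i + 1)
    rw [Nat.add_sub_cancel] at h
    have hcast := congrArg (Nat.cast : ℕ → ℝ) h
    push_cast at hcast
    exact hcast
  simp only [card_insert_neighborFinset, nsmul_eq_mul] at hsum
  push_cast at hsum
  simp only [card_dagarN_eq_orderRank]
  apply mul_left_cancel₀ (by positivity : (G.degree i + 1 : ℝ) ≠ 0)
  rw [hsum]
  linear_combination (Fintype.card V).factorial / 2 * hgauss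

lemma sum_perm_ite_lt_card_dagarN [DecidableRel G.Adj] {i j : V} (hij : G.Adj i j)
    (g : ℕ → ℝ) :
    ∑ π : Equiv.Perm V, (if permOrd π i < permOrd π j then g #(dagarN G (permOrd π) j) else 0)
      = (Fintype.card V).factorial *
          (1 / (G.degree j * (G.degree j + 1)) * ∑ r ∈ Icc 1 (G.degree j), r * g r) := by
  have hsum := sum_perm_ite_lt_orderRank
    (mem_insert_of_mem ((G.mem_neighborFinset j i).2 hij.symm))
    (mem_insert_self j (G.neighborFinset j)) hij.ne g
  have hrange : range (G.degree j + 1) = insert 0 (Icc 1 (G.degree j)) := by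
    ext m
    simp
    omega
  have hdeg : (0 : ℝ) < G.degree j := by
    exact_mod_cast G.degree_pos_iff_exists_adj j |>.2 ⟨i, hij.symm⟩
  simp only [card_insert_neighborFinset, hrange,
    sum_insert (by simp : 0 ∉ Icc 1 (G.degree j))] at hsum
  push_cast at hsum
  simp only [card_dagarN_eq_orderRank]
  field_simp
  linear_combination hsum

end Dagar

/-- Diagonal entries of the order-free DAGAR precision matrix:
`Q_{ii} = 1 + nᵢρ²/(2(1-ρ²)) + (ρ²/(1-ρ²)) ∑_{j∼i} (1/(n_j(n_j+1))) ∑_{r=1}^{n_j} r/(1+(r-1)ρ²)`. -/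
theorem dagarOF_diag {k : ℕ} (G : SimpleGraph (Fin k)) [DecidableRel G.Adj]
    (ρ : ℝ) (h0 : 0 ≤ ρ) (h1 : ρ < 1) (i : Fin k) :
    dagarOF G ρ i i
      = 1 + (G.degree i : ℝ) * ρ ^ 2 / (2 * (1 - ρ ^ 2))
        + ρ ^ 2 / (1 - ρ ^ 2) *
          ∑ j ∈ G.neighborFinset i,
            (1 / ((G.degree j : ℝ) * ((G.degree j : ℝ) + 1))) *
              ∑ r ∈ Finset.Icc 1 (G.degree j), (r : ℝ) / (1 + ((r : ℝ) - 1) * ρ ^ 2) := by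
  have hρ : ρ ^ 2 ≠ 1 := by nlinarith
  have hOF : dagarOF G ρ i i = (k.factorial : ℝ)⁻¹ * ∑ π, dagarQ G (permOrd π) ρ i i := by
    simp only [dagarOF, Matrix.smul_apply, Matrix.sum_apply, Fintype.card_fin]
    rfl
  rw [hOF]
  simp only [dagarQ_apply_self G _ hρ, sum_add_distrib, ← mul_sum, sum_const, card_univ,
    Fintype.card_perm, Fintype.card_fin]
  rw [sum_comm, sum_perm_card_dagarN, sum_congr rfl fun j hj => sum_perm_ite_lt_card_dagarN G
    ((G.mem_neighborFinset i j).1 hj) fun n => 1 / (1 + ((n : ℝ) - 1) * ρ ^ 2), ← mul_sum]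
  simp only [Fintype.card_fin, nsmul_eq_mul, mul_one_div]
  field_simp
  ring
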